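/- Let p > 2, a₀ = 2, δ₀ = 1. Then for every k ≥ 1 the numbers δ_k and a_k are well-defined by the recurrences: there exists a unique δ_k ∈ (0, δ_{k−1}) satisfying (2p/(2 + a_{k−1}))·(1 − δ_k/δ_{k−1}) − 1 + (δ_k/δ_{k−1})^p = 0, and with a_k := 2 − (δ_k/δ_{k−1})^{p−1}·(2 + a_{k−1}) one has a_k ∈ (0,2). -/

import Mathlib

open Filter Set

private lemma key_lemma7 (p a : ℝ) (hp : 2 < p) (ha0 : 0 < a) (ha2 : a ≤ 2) :
    ∃ t : ℝ, (0 < t ∧ t < 1) ∧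
      2 * p / (2 + a) * (1 - t) - 1 + t ^ p = 0 ∧
      (∀ s : ℝ, 0 < s → s < 1 → 2 * p / (2 + a) * (1 - s) - 1 + s ^ p = 0 → s = t) ∧
      0 < 2 - t ^ (p - 1) * (2 + a) ∧ 2 - t ^ (p - 1) * (2 + a) < 2 := by
  have hp0 : (0:ℝ) < p := by linarith
  have h2a : (0:ℝ) < 2 + a := by linarith
  set c : ℝ := 2 * p / (2 + a) with hc_def
  have hc1 : 1 < c := by
    rw [hc_def, lt_div_iff₀ h2a]; linarith
  have hcp : c < p := by
    rw [hc_def, div_lt_iff₀ h2a]; nlinarith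
  have hc0 : 0 < c := by linarith
  have hcp01 : 0 < c / p := div_pos hc0 hp0
  have hcp1 : c / p < 1 := (div_lt_one hp0).mpr hcp
  set f : ℝ → ℝ := fun t => c * (1 - t) - 1 + t ^ p with hf_def
  have hfc : Continuous f := by
    apply Continuous.add
    · fun_prop
    · rw [continuous_iff_continuousAt]
      intro x
      exact Real.continuousAt_rpow_const x p (Or.inr hp0.le)
  have hderiv : ∀ t : ℝ, t ≠ 0 → HasDerivAt f (p * t ^ (p - 1) - c) t := by
    intro t ht
    have h1 : HasDerivAt (fun t : ℝ => t ^ p) (p * t ^ (p - 1)) t :=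
      Real.hasDerivAt_rpow_const (Or.inl ht)
    have h2 : HasDerivAt (fun t : ℝ => c * (1 - t) - 1) (-c) t := by
      have : HasDerivAt (fun t : ℝ => 1 - t) (-1) t := by
        simpa using (hasDerivAt_id' t).const_sub (1:ℝ)
      simpa using (this.const_mul c).sub_const 1
    have := h2.add h1
    rw [show p * t ^ (p - 1) - c = -c + p * t ^ (p - 1) by ring]
    exact this
  have hp1 : (0:ℝ) < p - 1 := by linarith
  set m : ℝ := (c / p) ^ (p - 1)⁻¹ with hm_def
  have hm_pow : m ^ (p - 1) = c / p := Real.rpow_inv_rpow hcp01.le hp1.ne'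
  have hm0 : 0 < m := Real.rpow_pos_of_pos hcp01 _
  have hm1 : m < 1 := Real.rpow_lt_one hcp01.le hcp1 (by positivity)
  -- f strictly decreasing on [0, m]
  have hanti : StrictAntiOn f (Icc 0 m) := by
    apply strictAntiOn_of_deriv_neg (convex_Icc 0 m) hfc.continuousOn
    intro t ht
    rw [interior_Icc] at ht
    rw [(hderiv t ht.1.ne').deriv]
    have h1 : t ^ (p - 1) < m ^ (p - 1) := Real.rpow_lt_rpow ht.1.le ht.2 hp1
    rw [hm_pow] at h1
    have : p * t ^ (p - 1) < p * (c / p) := by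
      exact mul_lt_mul_of_pos_left h1 hp0
    rw [mul_div_cancel₀ _ hp0.ne'] at this
    linarith
  -- f strictly increasing on [m, 1]
  have hmono : StrictMonoOn f (Icc m 1) := by
    apply strictMonoOn_of_deriv_pos (convex_Icc m 1) hfc.continuousOn
    intro t ht
    rw [interior_Icc] at ht
    rw [(hderiv t (hm0.trans ht.1).ne').deriv]
    have h1 : m ^ (p - 1) < t ^ (p - 1) := Real.rpow_lt_rpow hm0.le ht.1 hp1
    rw [hm_pow] at h1
    have : p * (c / p) < p * t ^ (p - 1) := mul_lt_mul_of_pos_left h1 hp0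
    rw [mul_div_cancel₀ _ hp0.ne'] at this
    linarith
  have hf1 : f 1 = 0 := by simp [hf_def, Real.one_rpow]
  have hfm : f m < 0 := by
    have := hmono (left_mem_Icc.mpr hm1.le) (right_mem_Icc.mpr hm1.le) hm1
    rwa [hf1] at this
  have hf0 : 0 < f 0 := by
    simp only [hf_def, Real.zero_rpow hp0.ne', sub_zero, mul_one, add_zero]
    linarith
  -- IVT on [0, m]
  have hIVT : (0:ℝ) ∈ f '' Ioo 0 m := by
    apply intermediate_value_Ioo' hm0.le hfc.continuousOn
    exact ⟨hfm, hf0⟩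
  obtain ⟨t, ht, hft⟩ := hIVT
  have ht0 : 0 < t := ht.1
  have htm : t < m := ht.2
  have ht1 : t < 1 := htm.trans hm1
  -- root characterization
  have hroot_lt_m : ∀ s : ℝ, 0 < s → s < 1 → f s = 0 → s < m := by
    intro s hs0 hs1 hfs
    by_contra h
    push_neg at h
    have := hmono ⟨h, hs1.le⟩ (right_mem_Icc.mpr hm1.le) hs1
    rw [hf1, hfs] at this
    exact lt_irrefl 0 this
  have huniq : ∀ s : ℝ, 0 < s → s < 1 → f s = 0 → s = t := by
    intro s hs0 hs1 hfs
    have hsm := hroot_lt_m s hs0 hs1 hfs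
    exact hanti.injOn ⟨hs0.le, hsm.le⟩ ⟨ht0.le, htm.le⟩ (by rw [hfs, hft])
  -- bound on t^(p-1)
  have htp : t ^ (p - 1) < c / p := by
    have := Real.rpow_lt_rpow ht0.le htm hp1
    rwa [hm_pow] at this
  have htp0 : 0 < t ^ (p - 1) := Real.rpow_pos_of_pos ht0 _
  have hcpa : c / p * (2 + a) = 2 := by
    rw [hc_def]; field_simp
  refine ⟨t, ⟨ht0, ht1⟩, hft, huniq, ?_, ?_⟩
  · have : t ^ (p - 1) * (2 + a) < c / p * (2 + a) := by
      exact mul_lt_mul_of_pos_right htp h2a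
    rw [hcpa] at this
    linarith
  · nlinarith


/-- iterate a function on the subtype, starting from 2 -/
private noncomputable def seqA7 (F : {x : ℝ // 0 < x ∧ x ≤ 2} → {x : ℝ // 0 < x ∧ x ≤ 2}) :
    ℕ → {x : ℝ // 0 < x ∧ x ≤ 2}
  | 0 => ⟨2, by norm_num⟩
  | n + 1 => F (seqA7 F n)

theorem statement7 (p : ℝ) (hp : 2 < p) :
    ∃ a δ : ℕ → ℝ, a 0 = 2 ∧ δ 0 = 1 ∧
      ∀ k : ℕ,
        δ (k + 1) ∈ Set.Ioo 0 (δ k) ∧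
        2 * p / (2 + a k) * (1 - δ (k + 1) / δ k) - 1 + (δ (k + 1) / δ k) ^ p = 0 ∧
        (∀ x ∈ Set.Ioo 0 (δ k),
          2 * p / (2 + a k) * (1 - x / δ k) - 1 + (x / δ k) ^ p = 0 → x = δ (k + 1)) ∧
        a (k + 1) = 2 - (δ (k + 1) / δ k) ^ (p - 1) * (2 + a k) ∧
        a (k + 1) ∈ Set.Ioo (0:ℝ) 2 := by
  classical
  -- chosen root for each admissible a
  have key := fun (a : ℝ) (h0 : 0 < a) (h2 : a ≤ 2) => key_lemma7 p a hp h0 h2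
  choose t ht01 heq huniq ha0' ha2' using key
  -- step function on the subtype
  set F : {x : ℝ // 0 < x ∧ x ≤ 2} → {x : ℝ // 0 < x ∧ x ≤ 2} :=
    fun x => ⟨2 - t x.1 x.2.1 x.2.2 ^ (p - 1) * (2 + x.1),
      ⟨ha0' x.1 x.2.1 x.2.2, (ha2' x.1 x.2.1 x.2.2).le⟩⟩ with hF
  set A : ℕ → {x : ℝ // 0 < x ∧ x ≤ 2} := seqA7 F with hA
  set r : ℕ → ℝ := fun n => t (A n).1 (A n).2.1 (A n).2.2 with hr
  have hr0 : ∀ n, 0 < r n := fun n => (ht01 _ _ _).1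
  have hr1 : ∀ n, r n < 1 := fun n => (ht01 _ _ _).2
  set δ : ℕ → ℝ := fun n => ∏ i ∈ Finset.range n, r i with hδ
  have hδpos : ∀ n, 0 < δ n := fun n => Finset.prod_pos (fun i _ => hr0 i)
  have hδsucc : ∀ n, δ (n + 1) = δ n * r n := fun n => Finset.prod_range_succ r n
  have hratio : ∀ n, δ (n + 1) / δ n = r n := by
    intro n
    rw [hδsucc n]
    exact mul_div_cancel_left₀ (r n) (hδpos n).ne'
  have hAsucc : ∀ n, (A (n + 1) : ℝ) = 2 - r n ^ (p - 1) * (2 + (A n : ℝ)) := by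
    intro n
    rfl
  refine ⟨fun n => (A n : ℝ), δ, rfl, by simp [hδ], ?_⟩
  intro k
  refine ⟨⟨hδpos (k + 1), ?_⟩, ?_, ?_, ?_, ?_⟩
  · rw [hδsucc k]
    nth_rewrite 2 [← mul_one (δ k)]
    exact mul_lt_mul_of_pos_left (hr1 k) (hδpos k)
  · rw [hratio k]
    exact heq _ _ _
  · intro x hx hxeq
    have hs0 : 0 < x / δ k := div_pos hx.1 (hδpos k)
    have hs1 : x / δ k < 1 := (div_lt_one (hδpos k)).mpr hx.2
    have h : x / δ k = r k := huniq _ (A k).2.1 (A k).2.2 (x / δ k) hs0 hs1 hxeq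
    rw [div_eq_iff (hδpos k).ne'] at h
    rw [hδsucc k, h]
    ring
  · rw [hratio k]
    exact hAsucc k
  · exact ⟨ha0' _ _ _, ha2' _ _ _⟩
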